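/- arXiv:1102.4409 — 2 statements merged into one kernel-verified Lean document; each statement's English description precedes it below -/
import Mathlib

section
/- Let G be a weighted graph on n vertices with all degrees positive, and let λ̄ = max{|1 − λ_1|, |1 − λ_{n−1}|}. For any subsets X, Y of V, |w(X,Y) − vol(X)·vol(Y)/vol(G)| ≤ λ̄ · √(vol(X)·vol(Y)·vol(X̄)·vol(Ȳ)) / vol(G), where w(X,Y) = Σ_{x∈X} Σ_{y∈Y} w(x,y). -/
open Matrix Polynomial

noncomputable section

/-- The degree of a vertex in a weighted graph with weight function `w`. -/
def wdeg {V : Type*} [Fintype V] (w : V → V → ℝ) (x : V) : ℝ := ∑ y, w x y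

/-- The diagonal matrix `T^{-1/2}` of a weighted graph. -/
def invSqrtT {V : Type*} [Fintype V] [DecidableEq V] (w : V → V → ℝ) : Matrix V V ℝ :=
  Matrix.diagonal fun x => (Real.sqrt (wdeg w x))⁻¹

/-- The (normalized) Laplacian `I - T^{-1/2} A T^{-1/2}` of a weighted graph. -/
def wLap {V : Type*} [Fintype V] [DecidableEq V] (w : V → V → ℝ) : Matrix V V ℝ :=
  1 - invSqrtT w * Matrix.of w * invSqrtT w

/-- The volume of a set of vertices of a weighted graph. -/
def wvol {V : Type*} [Fintype V] (w : V → V → ℝ) (X : Finset V) : ℝ := ∑ x ∈ X, wdeg w x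

/-- `μ` lists the eigenvalues of the square matrix `M` (with multiplicity)
in non-decreasing order. -/
def IsEigenSeq {m : Type*} [Fintype m] [DecidableEq m] (M : Matrix m m ℝ) {n : ℕ}
    (μ : Fin n → ℝ) : Prop :=
  Monotone μ ∧ M.charpoly = ∏ i, (X - C (μ i))

/-! Write `s = T^{1/2} 𝟙`, the kernel vector of the Laplacian `L`, and `u_Z` for the component
of `T^{1/2} 𝟙_Z` orthogonal to `s`. Then `w(X,Y) - vol X vol Y / vol G = ⟪u_X, (I - L) u_Y⟫` and
`‖u_Z‖² = vol Z vol Z̄ / vol G`. In an orthonormal eigenbasis of `L` the operator `I - L` acts by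
the numbers `1 - λ_i`, all of which lie in `[-λ̄, λ̄]` except possibly `1 - λ_0 = 1` when
`λ_0 = 0 < λ_1` (here `L ⪰ 0` is used); that eigenvalue is then simple, its eigenvector is
parallel to `s`, and `u_X` has no component along it. Cauchy–Schwarz in the eigenbasis finishes
the proof. -/

open Finset

theorem IsEigenSeq.eigenvalues₀_eq {V : Type*} [Fintype V] [DecidableEq V] {A : Matrix V V ℝ}
    (hA : A.IsHermitian) {μ : Fin (Fintype.card V) → ℝ} (hμ : IsEigenSeq A μ) :
    hA.eigenvalues₀ = μ ∘ Fin.rev := by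
  have hroots : (List.ofFn hA.eigenvalues₀).Perm (List.ofFn μ) := by
    have h := hA.roots_charpoly_eq_eigenvalues₀
    rw [hμ.2, Polynomial.roots_prod _ _ (by
      simp [Finset.prod_ne_zero_iff, Polynomial.X_sub_C_ne_zero])] at h
    simpa [Fin.univ_val_map] using h.symm
  apply List.ofFn_injective
  refine List.Perm.eq_of_pairwise' hA.eigenvalues₀_antitone.sortedGE_ofFn.pairwise
    (hμ.1.comp_antitone Fin.rev_anti).sortedGE_ofFn.pairwise ?_
  exact hroots.trans (Fin.revPerm.ofFn_comp_perm μ).symm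

theorem IsEigenSeq.exists_equiv_eigenvalues_eq {V : Type*} [Fintype V] [DecidableEq V]
    {A : Matrix V V ℝ} (hA : A.IsHermitian) {n : ℕ} (hn : Fintype.card V = n) {μ : Fin n → ℝ}
    (hμ : IsEigenSeq A μ) : ∃ σ : V ≃ Fin n, ∀ i, hA.eigenvalues i = μ (σ i) := by
  subst hn
  refine ⟨(Fintype.equivOfCardEq (Fintype.card_fin _)).symm.trans Fin.revPerm, fun i => ?_⟩
  simp [Matrix.IsHermitian.eigenvalues, hμ.eigenvalues₀_eq hA]

theorem val_eq_zero_of_lt_abs_one_sub {n : ℕ} (hn : 1 < n) {μ : Fin n → ℝ} (hμ : Monotone μ)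
    {j : Fin n} (hj : max |1 - μ ⟨1, hn⟩| |1 - μ ⟨n - 1, Nat.sub_one_lt_of_lt hn⟩| < |1 - μ j|) :
    (j : ℕ) = 0 ∧ μ j < μ ⟨1, hn⟩ := by
  have hmiddle : ∀ k : Fin n, 1 ≤ (k : ℕ) →
      |1 - μ k| ≤ max |1 - μ ⟨1, hn⟩| |1 - μ ⟨n - 1, Nat.sub_one_lt_of_lt hn⟩| := fun k hk =>
    max_comm (|1 - μ ⟨n - 1, Nat.sub_one_lt_of_lt hn⟩|) _ ▸ abs_le_max_abs_abs
      (sub_le_sub_left (hμ (Fin.le_def.mpr (by simp; omega))) 1)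
      (sub_le_sub_left (hμ (Fin.le_def.mpr hk)) 1)
  have hj0 : (j : ℕ) = 0 := by
    by_contra h
    exact (hmiddle j (by omega)).not_gt hj
  refine ⟨hj0, (hμ (Fin.le_def.mpr (by simp [hj0]))).lt_of_ne fun heq => ?_⟩
  exact (heq ▸ le_max_left _ _ : |1 - μ j| ≤ _).not_gt hj

theorem abs_dotProduct_diagonal_mulVec_le {V : Type*} [Fintype V] [DecidableEq V]
    {t a : V → ℝ} {lam : ℝ} (hlam : 0 ≤ lam) (h : ∀ i, |t i| ≤ lam ∨ a i = 0) (b : V → ℝ) :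
    |a ⬝ᵥ Matrix.diagonal t *ᵥ b| ≤ lam * √(a ⬝ᵥ a) * √(b ⬝ᵥ b) := by
  have hterm : ∀ i, |a i * (t i * b i)| ≤ lam * (|a i| * |b i|) := by
    intro i
    rcases h i with hi | hi
    · rw [abs_mul, abs_mul, mul_left_comm]
      exact mul_le_mul_of_nonneg_right hi (by positivity)
    · simp [hi]
  calc |a ⬝ᵥ Matrix.diagonal t *ᵥ b| = |∑ i, a i * (t i * b i)| := by
        simp [dotProduct, Matrix.mulVec_diagonal]
    _ ≤ ∑ i, lam * (|a i| * |b i|) := (abs_sum_le_sum_abs _ _).trans (sum_le_sum fun i _ => hterm i)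
    _ = lam * ∑ i, |a i| * |b i| := by rw [mul_sum]
    _ ≤ lam * (√(∑ i, |a i| ^ 2) * √(∑ i, |b i| ^ 2)) :=
        mul_le_mul_of_nonneg_left (Real.sum_mul_le_sqrt_mul_sqrt _ _ _) hlam
    _ = lam * √(a ⬝ᵥ a) * √(b ⬝ᵥ b) := by simp [dotProduct, pow_two, mul_assoc]

theorem apply_eq_zero_of_dotProduct_eq_zero_of_diagonal_mulVec_eq_zero {V : Type*} [Fintype V]
    [DecidableEq V] {κ c a : V → ℝ} (hκc : Matrix.diagonal κ *ᵥ c = 0) (hc : c ≠ 0)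
    (hac : a ⬝ᵥ c = 0) {i : V} (hκ : ∀ j ≠ i, κ j ≠ 0) : a i = 0 := by
  have hcj (j : V) (hj : j ≠ i) : c j = 0 := by
    have := congrFun hκc j
    rw [Matrix.mulVec_diagonal, Pi.zero_apply] at this
    exact (mul_eq_zero.mp this).resolve_left (hκ j hj)
  have hci : c i ≠ 0 := fun h0 => hc (funext fun j => by
    by_cases hj : j = i
    · exact hj ▸ h0
    · exact hcj j hj)
  rw [dotProduct, Finset.sum_eq_single i (fun j _ hj => by rw [hcj j hj, mul_zero])
    (by simp)] at hac
  exact (mul_eq_zero.mp hac).resolve_right hci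

theorem Matrix.IsHermitian.eq_mul_diagonal_mul_transpose {V : Type*} [Fintype V] [DecidableEq V]
    {L : Matrix V V ℝ} (hL : L.IsHermitian) :
    L = (hL.eigenvectorUnitary : Matrix V V ℝ) * Matrix.diagonal hL.eigenvalues *
      (hL.eigenvectorUnitary : Matrix V V ℝ)ᵀ := by
  conv_lhs => rw [hL.spectral_theorem]
  simp [Matrix.star_eq_conjTranspose]

theorem Matrix.IsHermitian.eigenvectorUnitary_mul_transpose {V : Type*} [Fintype V]
    [DecidableEq V] {L : Matrix V V ℝ} (hL : L.IsHermitian) :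
    (hL.eigenvectorUnitary : Matrix V V ℝ) * (hL.eigenvectorUnitary : Matrix V V ℝ)ᵀ = 1 := by
  simpa [Matrix.star_eq_conjTranspose] using Unitary.coe_mul_star_self hL.eigenvectorUnitary

theorem Matrix.dotProduct_mul_mul_transpose_mulVec {V R : Type*} [Fintype V] [CommRing R]
    (U D : Matrix V V R) (x y : V → R) :
    x ⬝ᵥ (U * D * Uᵀ) *ᵥ y = (Uᵀ *ᵥ x) ⬝ᵥ D *ᵥ (Uᵀ *ᵥ y) := by
  rw [← Matrix.mulVec_mulVec, ← Matrix.mulVec_mulVec, Matrix.dotProduct_mulVec,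
    Matrix.mulVec_transpose, Matrix.mulVec_transpose]

theorem Matrix.PosSemidef.abs_dotProduct_one_sub_mulVec_le {V : Type*} [Fintype V]
    [DecidableEq V] {L : Matrix V V ℝ} (hL : L.PosSemidef) {n : ℕ} (hn : Fintype.card V = n)
    (hn1 : 1 < n) {μ : Fin n → ℝ} (hμ : IsEigenSeq L μ) {g : V → ℝ} (hg : g ≠ 0)
    (hLg : L *ᵥ g = 0) {u : V → ℝ} (hu : u ⬝ᵥ g = 0) (v : V → ℝ) :
    |u ⬝ᵥ (1 - L) *ᵥ v| ≤
      max |1 - μ ⟨1, hn1⟩| |1 - μ ⟨n - 1, Nat.sub_one_lt_of_lt hn1⟩| * √(u ⬝ᵥ u) * √(v ⬝ᵥ v) := by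
  obtain ⟨σ, hσ⟩ := hμ.exists_equiv_eigenvalues_eq hL.1 hn
  set κ := hL.1.eigenvalues
  set U : Matrix V V ℝ := (hL.1.eigenvectorUnitary : Matrix V V ℝ)
  have hUUt : U * Uᵀ = 1 := hL.1.eigenvectorUnitary_mul_transpose
  have hUtU : Uᵀ * U = 1 := mul_eq_one_comm.mp hUUt
  have hL_eq : L = U * diagonal κ * Uᵀ := hL.1.eq_mul_diagonal_mul_transpose
  have hdot (x y : V → ℝ) : (Uᵀ *ᵥ x) ⬝ᵥ (Uᵀ *ᵥ y) = x ⬝ᵥ y := by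
    simpa [hUUt] using (dotProduct_mul_mul_transpose_mulVec U 1 x y).symm
  have hone_sub : 1 - L = U * diagonal (1 - κ) * Uᵀ := by
    rw [hL_eq, show 1 - κ = fun i => 1 - κ i from rfl, ← diagonal_sub, diagonal_one,
      Matrix.mul_sub, Matrix.sub_mul, mul_one, hUUt]
  set c := Uᵀ *ᵥ g
  have hκc : diagonal κ *ᵥ c = 0 := calc
    diagonal κ *ᵥ c = (Uᵀ * U * diagonal κ * Uᵀ) *ᵥ g := by
      rw [hUtU, Matrix.one_mul, ← mulVec_mulVec]
    _ = Uᵀ *ᵥ (L *ᵥ g) := by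
      rw [hL_eq, mulVec_mulVec]
      simp only [Matrix.mul_assoc]
    _ = 0 := by rw [hLg, mulVec_zero]
  have hc : c ≠ 0 := fun h0 => hg <| by
    rw [← Matrix.one_mulVec g, ← hUUt, ← mulVec_mulVec]
    exact (congrArg (U *ᵥ ·) h0).trans (mulVec_zero U)
  rw [hone_sub, dotProduct_mul_mul_transpose_mulVec, ← hdot u, ← hdot v]
  refine abs_dotProduct_diagonal_mulVec_le (le_max_of_le_left (abs_nonneg _)) (fun i => ?_) _
  -- `|1 - κ i| > λ̄` forces `κ i = 0` to be simple, so its eigenvector is `∥ g`, hence `⊥ u`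
  refine or_iff_not_imp_left.mpr fun hi => ?_
  have hi' : max |1 - μ ⟨1, by omega⟩| |1 - μ ⟨n - 1, by omega⟩| < |1 - μ (σ i)| := by
    rw [← hσ i]
    exact not_le.mp hi
  obtain ⟨hi0, hi1⟩ := val_eq_zero_of_lt_abs_one_sub hn1 hμ.1 hi'
  refine apply_eq_zero_of_dotProduct_eq_zero_of_diagonal_mulVec_eq_zero hκc hc
    ((hdot u g).trans hu) fun j hj => ?_
  have h1 : μ ⟨1, by omega⟩ ≤ κ j := hσ j ▸ hμ.1 (Fin.le_def.mpr (by
    have := Fin.val_ne_of_ne (σ.injective.ne hj); simp only; omega))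
  linarith [hL.eigenvalues_nonneg i, hσ i]

theorem wvol_univ_pos {V : Type*} [Fintype V] [Nonempty V] {w : V → V → ℝ}
    (hdeg : ∀ x, 0 < wdeg w x) : 0 < wvol w univ :=
  sum_pos (fun x _ => hdeg x) univ_nonempty

section WeightedGraph

variable {V : Type*} [Fintype V] [DecidableEq V]

/-- `T^{1/2} 𝟙_Z`. -/
def sqrtDegOn (w : V → V → ℝ) (Z : Finset V) : V → ℝ :=
  fun x => if x ∈ Z then √(wdeg w x) else 0

def sqrtDegOnPerp (w : V → V → ℝ) (Z : Finset V) : V → ℝ :=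
  sqrtDegOn w Z - (wvol w Z / wvol w univ) • sqrtDegOn w univ

variable {w : V → V → ℝ}

theorem one_sub_wLap_apply (x y : V) :
    (1 - wLap w) x y = w x y / (√(wdeg w x) * √(wdeg w y)) := by
  simp [wLap, invSqrtT, mul_diagonal, diagonal_mul]
  ring

theorem isHermitian_wLap (hsymm : ∀ u v, w u v = w v u) : (wLap w).IsHermitian := by
  have h : (1 - wLap w).IsHermitian := by
    rw [IsHermitian, conjTranspose_eq_transpose_of_trivial]
    ext x y
    rw [transpose_apply, one_sub_wLap_apply, one_sub_wLap_apply, hsymm, mul_comm]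
  simpa using isHermitian_one.sub h

theorem two_mul_dotProduct_wLap_mulVec (hsymm : ∀ u v, w u v = w v u)
    (hdeg : ∀ x, 0 < wdeg w x) (v : V → ℝ) :
    2 * (v ⬝ᵥ wLap w *ᵥ v) =
      ∑ x, ∑ y, w x y * (v x / √(wdeg w x) - v y / √(wdeg w y)) ^ 2 := by
  set f : V → ℝ := fun x => v x / √(wdeg w x)
  have hcross : v ⬝ᵥ (1 - wLap w) *ᵥ v = ∑ x, ∑ y, w x y * (f x * f y) := by
    simp only [dotProduct, mulVec, one_sub_wLap_apply, mul_sum]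
    refine sum_congr rfl fun x _ => sum_congr rfl fun y _ => ?_
    simp only [f]
    field_simp
  have hleft : v ⬝ᵥ v = ∑ x, ∑ y, w x y * f x ^ 2 := by
    refine sum_congr rfl fun x _ => ?_
    rw [← sum_mul]
    change v x * v x = wdeg w x * (v x / √(wdeg w x)) ^ 2
    rw [div_pow, Real.sq_sqrt (hdeg x).le]
    field_simp [(hdeg x).ne']
  have hright : v ⬝ᵥ v = ∑ x, ∑ y, w x y * f y ^ 2 := by
    rw [hleft, sum_comm]
    simp only [hsymm]
  have hexpand : ∑ x, ∑ y, w x y * (f x - f y) ^ 2 = ∑ x, ∑ y, w x y * f x ^ 2 +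
      ∑ x, ∑ y, w x y * f y ^ 2 - 2 * ∑ x, ∑ y, w x y * (f x * f y) := by
    simp only [mul_sum, ← sum_add_distrib, ← sum_sub_distrib]
    refine sum_congr rfl fun x _ => sum_congr rfl fun y _ => by ring
  have hsplit : v ⬝ᵥ wLap w *ᵥ v = v ⬝ᵥ v - v ⬝ᵥ (1 - wLap w) *ᵥ v := by
    simp [sub_mulVec, dotProduct_sub]
  change _ = ∑ x, ∑ y, w x y * (f x - f y) ^ 2
  linarith

theorem posSemidef_wLap (hsymm : ∀ u v, w u v = w v u) (hnonneg : ∀ u v, 0 ≤ w u v)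
    (hdeg : ∀ x, 0 < wdeg w x) : (wLap w).PosSemidef := by
  refine .of_dotProduct_mulVec_nonneg (isHermitian_wLap hsymm) fun v => ?_
  have h := two_mul_dotProduct_wLap_mulVec hsymm hdeg v
  have : 0 ≤ ∑ x, ∑ y, w x y * (v x / √(wdeg w x) - v y / √(wdeg w y)) ^ 2 :=
    sum_nonneg fun x _ => sum_nonneg fun y _ => mul_nonneg (hnonneg x y) (sq_nonneg _)
  rw [star_trivial]
  linarith

theorem sqrtDegOn_dotProduct_sqrtDegOn (hdeg : ∀ x, 0 ≤ wdeg w x) (Y Z : Finset V) :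
    sqrtDegOn w Y ⬝ᵥ sqrtDegOn w Z = wvol w (Y ∩ Z) := by
  simp only [dotProduct, sqrtDegOn, ite_mul, mul_ite, mul_zero, zero_mul, sum_ite_mem,
    univ_inter, inter_comm Z Y, wvol]
  exact sum_congr rfl fun x _ => Real.mul_self_sqrt (hdeg x)

theorem sqrtDegOn_dotProduct_one_sub_wLap_mulVec (hdeg : ∀ x, 0 < wdeg w x) (X Y : Finset V) :
    sqrtDegOn w X ⬝ᵥ (1 - wLap w) *ᵥ sqrtDegOn w Y = ∑ x ∈ X, ∑ y ∈ Y, w x y := by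
  simp only [dotProduct, mulVec, sqrtDegOn, ite_mul, zero_mul, sum_ite_mem, univ_inter]
  simp only [mul_ite, mul_zero, sum_ite_mem, univ_inter, mul_sum, one_sub_wLap_apply]
  refine sum_congr rfl fun x _ => sum_congr rfl fun y _ => ?_
  have := (Real.sqrt_pos.mpr (hdeg x)).ne'
  have := (Real.sqrt_pos.mpr (hdeg y)).ne'
  field_simp

theorem wLap_mulVec_sqrtDegOn_univ (hdeg : ∀ x, 0 < wdeg w x) :
    wLap w *ᵥ sqrtDegOn w univ = 0 := by
  have h : (1 - wLap w) *ᵥ sqrtDegOn w univ = sqrtDegOn w univ := by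
    funext x
    have hx := (Real.sqrt_pos.mpr (hdeg x)).ne'
    simp only [mulVec, dotProduct, sqrtDegOn, mem_univ, if_true, one_sub_wLap_apply]
    calc ∑ y, w x y / (√(wdeg w x) * √(wdeg w y)) * √(wdeg w y)
        = wdeg w x / √(wdeg w x) := by
          rw [wdeg, sum_div]
          refine sum_congr rfl fun y _ => ?_
          have := (Real.sqrt_pos.mpr (hdeg y)).ne'
          field_simp
      _ = √(wdeg w x) := by rw [div_eq_iff hx, Real.mul_self_sqrt (hdeg x).le]
  simpa [sub_mulVec] using h

theorem sqrtDegOn_univ_ne_zero [Nonempty V] (hdeg : ∀ x, 0 < wdeg w x) :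
    sqrtDegOn w univ ≠ 0 := fun h => by
  have := sqrtDegOn_dotProduct_sqrtDegOn (fun x => (hdeg x).le) univ univ
  rw [h, zero_dotProduct, univ_inter] at this
  exact (wvol_univ_pos hdeg).ne this

theorem sqrtDegOnPerp_dotProduct_sqrtDegOn_univ [Nonempty V] (hdeg : ∀ x, 0 < wdeg w x)
    (Z : Finset V) : sqrtDegOnPerp w Z ⬝ᵥ sqrtDegOn w univ = 0 := by
  have hG := (wvol_univ_pos hdeg).ne'
  simp only [sqrtDegOnPerp, sub_dotProduct, smul_dotProduct, smul_eq_mul, inter_univ,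
    sqrtDegOn_dotProduct_sqrtDegOn fun x => (hdeg x).le]
  field_simp
  ring

theorem sqrtDegOnPerp_dotProduct_self [Nonempty V] (hdeg : ∀ x, 0 < wdeg w x) (Z : Finset V) :
    sqrtDegOnPerp w Z ⬝ᵥ sqrtDegOnPerp w Z = wvol w Z * wvol w Zᶜ / wvol w univ := by
  have hG := (wvol_univ_pos hdeg).ne'
  have hcompl : wvol w Zᶜ = wvol w univ - wvol w Z := eq_sub_of_add_eq' (sum_add_sum_compl Z _)
  simp only [sqrtDegOnPerp, sub_dotProduct, dotProduct_sub, smul_dotProduct, dotProduct_smul,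
    smul_eq_mul, inter_self, inter_univ, univ_inter, hcompl,
    sqrtDegOn_dotProduct_sqrtDegOn fun x => (hdeg x).le]
  field_simp
  ring

theorem sqrtDegOnPerp_dotProduct_one_sub_wLap_mulVec [Nonempty V] (hsymm : ∀ u v, w u v = w v u)
    (hdeg : ∀ x, 0 < wdeg w x) (X Y : Finset V) :
    sqrtDegOnPerp w X ⬝ᵥ (1 - wLap w) *ᵥ sqrtDegOnPerp w Y =
      ∑ x ∈ X, ∑ y ∈ Y, w x y - wvol w X * wvol w Y / wvol w univ := by
  have hG := (wvol_univ_pos hdeg).ne'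
  have hvol_left (Z : Finset V) : ∑ x ∈ Z, ∑ y ∈ univ, w x y = wvol w Z := rfl
  have hvol_right (Z : Finset V) : ∑ x ∈ univ, ∑ y ∈ Z, w x y = wvol w Z := by
    rw [sum_comm]
    simp only [hsymm]
    rfl
  simp only [sqrtDegOnPerp, mulVec_sub, mulVec_smul, sub_dotProduct, dotProduct_sub,
    smul_dotProduct, dotProduct_smul, smul_eq_mul, hvol_left, hvol_right,
    sqrtDegOn_dotProduct_one_sub_wLap_mulVec hdeg]
  field_simp
  ring

end WeightedGraph

/-- expander mixing lemma for weighted graphs. -/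
theorem stmt_3 {V : Type*} [Fintype V] [DecidableEq V]
    (w : V → V → ℝ)
    (hsymm : ∀ u v, w u v = w v u)
    (hnonneg : ∀ u v, 0 ≤ w u v)
    (hdegpos : ∀ x, 0 < wdeg w x)
    (n : ℕ) (hn : Fintype.card V = n) (hn2 : 2 ≤ n)
    (μ : Fin n → ℝ) (hμ : IsEigenSeq (wLap w) μ)
    (X Y : Finset V) :
    |(∑ x ∈ X, ∑ y ∈ Y, w x y) - wvol w X * wvol w Y / wvol w Finset.univ| ≤
      (max |1 - μ ⟨1, by omega⟩| |1 - μ ⟨n - 1, by omega⟩|) *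
        Real.sqrt (wvol w X * wvol w Y * wvol w Xᶜ * wvol w Yᶜ) / wvol w Finset.univ := by
  have : Nonempty V := Fintype.card_pos_iff.mp (by omega)
  have hG := wvol_univ_pos hdegpos
  have hvol (Z : Finset V) : 0 ≤ wvol w Z := sum_nonneg fun x _ => (hdegpos x).le
  have hbound := (posSemidef_wLap hsymm hnonneg hdegpos).abs_dotProduct_one_sub_mulVec_le hn
    (by omega) hμ (sqrtDegOn_univ_ne_zero hdegpos) (wLap_mulVec_sqrtDegOn_univ hdegpos)
    (sqrtDegOnPerp_dotProduct_sqrtDegOn_univ hdegpos X) (sqrtDegOnPerp w Y)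
  rw [sqrtDegOnPerp_dotProduct_one_sub_wLap_mulVec hsymm hdegpos,
    sqrtDegOnPerp_dotProduct_self hdegpos, sqrtDegOnPerp_dotProduct_self hdegpos] at hbound
  have hsqrt : √(wvol w X * wvol w Xᶜ / wvol w univ) * √(wvol w Y * wvol w Yᶜ / wvol w univ) =
      √(wvol w X * wvol w Y * wvol w Xᶜ * wvol w Yᶜ) / wvol w univ := by
    rw [← Real.sqrt_mul (div_nonneg (mul_nonneg (hvol X) (hvol _)) hG.le), div_mul_div_comm,
      Real.sqrt_div' _ (mul_self_nonneg _), Real.sqrt_mul_self hG.le, mul_mul_mul_comm,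
      ← mul_assoc]
  rwa [mul_assoc, hsqrt, ← mul_div_assoc] at hbound
end
end

section
/- Let D be a Eulerian directed graph on n vertices with all degrees positive. For every 0 ≤ α ≤ 1, σ_α² ≤ α² + 2α(1−α)(1−λ_1) + (1−α)²σ_0², where λ_1 is the first non-trivial eigenvalue of the Laplacian of D. -/
open Matrix Polynomial

noncomputable section

/-- The (out-)degree of a vertex in a directed graph with adjacency matrix `A`. -/
def ddeg {V : Type*} [Fintype V] (A : Matrix V V ℝ) (x : V) : ℝ := ∑ y, A x y

/-- The diagonal matrix `T^{-1/2}` of a directed graph. -/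
def dInvSqrtT {V : Type*} [Fintype V] [DecidableEq V] (A : Matrix V V ℝ) : Matrix V V ℝ :=
  Matrix.diagonal fun x => (Real.sqrt (ddeg A x))⁻¹

/-- The non-symmetric Laplacian `vecL = I - T^{-1/2} A T^{-1/2}` of a directed graph. -/
def dvecL {V : Type*} [Fintype V] [DecidableEq V] (A : Matrix V V ℝ) : Matrix V V ℝ :=
  1 - dInvSqrtT A * A * dInvSqrtT A

/-- The Laplacian `(vecL + vecLᵀ)/2` of a directed graph. -/
def dLap {V : Type*} [Fintype V] [DecidableEq V] (A : Matrix V V ℝ) : Matrix V V ℝ :=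
  (1 / 2 : ℝ) • (dvecL A + (dvecL A)ᵀ)

/-- The matrix `L_α = I - (1-α) vecL = T^{1/2} P_α T^{-1/2}`. -/
def dLalpha {V : Type*} [Fintype V] [DecidableEq V] (A : Matrix V V ℝ) (α : ℝ) :
    Matrix V V ℝ :=
  1 - (1 - α) • dvecL A

/-- The transition matrix `P_α = α I + (1-α) T⁻¹ A` of the α-lazy random walk. -/
def dTrans {V : Type*} [Fintype V] [DecidableEq V] (A : Matrix V V ℝ) (α : ℝ) :
    Matrix V V ℝ :=
  α • (1 : Matrix V V ℝ) + (1 - α) • ((Matrix.diagonal fun x => (ddeg A x)⁻¹) * A)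

/-- The volume of a set of vertices of a directed graph. -/
def dvol {V : Type*} [Fintype V] (A : Matrix V V ℝ) (X : Finset V) : ℝ :=
  ∑ x ∈ X, ddeg A x

/-- The unit vector `φ₀` with `φ₀(x) = √(d_x)/√(vol D)`. -/
def dphi {V : Type*} [Fintype V] (A : Matrix V V ℝ) : V → ℝ :=
  fun x => Real.sqrt (ddeg A x) / Real.sqrt (dvol A Finset.univ)

/-- Euclidean norm of a (row or column) vector. -/
def euclNorm {m : Type*} [Fintype m] (f : m → ℝ) : ℝ := Real.sqrt (∑ x, f x ^ 2)

/-- The set of values `‖L_α f‖ / ‖f‖` over nonzero vectors `f` orthogonal to `φ₀ᵀ`;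
its greatest element is the second largest singular value `σ_α` of `L_α`. -/
def sigmaSet {V : Type*} [Fintype V] [DecidableEq V] (A : Matrix V V ℝ) (α : ℝ) : Set ℝ :=
  {r | ∃ f : V → ℝ, f ≠ 0 ∧ (∑ x, f x * dphi A x) = 0 ∧
    r = euclNorm (dLalpha A α *ᵥ f) / euclNorm f}

/-! Since `L_α = α I + (1 - α) L_0`, for a vector `f ⊥ φ₀` attaining `σ_α`,
`‖L_α f‖² = α²‖f‖² + 2α(1-α)⟪f, L_0 f⟫ + (1-α)²‖L_0 f‖²`. The last term is at most
`σ₀²‖f‖²`, and `⟪f, L_0 f⟫ = ‖f‖² - ⟪f, L f⟫ ≤ (1 - λ₁)‖f‖²`: on a Eulerian graph the Laplacian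
is positive semidefinite with `φ₀` in its kernel, so `φ₀` is a bottom eigenvector and the
quadratic form of `L` on `φ₀^⊥` is at least `λ₁‖f‖²`. -/

open Finset

lemma mul_sum_sq_le_of_orthogonal_to_kernel {ι : Type*} [Fintype ι] [DecidableEq ι]
    {ν b c : ι → ℝ} {m : ℝ} (hν : ∀ i, 0 ≤ ν i) (hcard : #{i | ν i < m} ≤ 1)
    (hb : b ≠ 0) (hνb : ∀ i, ν i * b i = 0) (hcb : ∑ i, c i * b i = 0) :
    m * ∑ i, c i ^ 2 ≤ ∑ i, ν i * c i ^ 2 := by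
  -- For `m > 0` the only weight below `m` sits where `b ≠ 0`, and `c ⊥ b` kills `c` there.
  rcases le_or_gt m 0 with hm | hm
  · exact (mul_nonpos_of_nonpos_of_nonneg hm (by positivity)).trans
      (sum_nonneg fun i _ => mul_nonneg (hν i) (sq_nonneg _))
  obtain ⟨k, hbk⟩ := Function.ne_iff.mp hb
  have hνk : ν k = 0 := (mul_eq_zero.mp (hνb k)).resolve_right hbk
  have hge : ∀ i ≠ k, m ≤ ν i := fun i hik => by
    by_contra! hi
    exact hik (card_le_one.mp hcard i (by simp [hi]) k (by simp [hνk, hm]))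
  have hbi : ∀ i ≠ k, b i = 0 := fun i hik =>
    (mul_eq_zero.mp (hνb i)).resolve_left (hm.trans_le (hge i hik)).ne'
  have hck : c k = 0 := by
    rw [sum_eq_single k (fun i _ hik => by rw [hbi i hik, mul_zero]) (by simp)] at hcb
    exact (mul_eq_zero.mp hcb).resolve_right hbk
  rw [mul_sum]
  refine sum_le_sum fun i _ => ?_
  rcases eq_or_ne i k with rfl | hik
  · simp [hck]
  · exact mul_le_mul_of_nonneg_right (hge i hik) (sq_nonneg _)

namespace Matrix.IsHermitian

variable {V : Type*} [Fintype V] [DecidableEq V] {L : Matrix V V ℝ} (hL : L.IsHermitian)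

lemma dotProduct_eq_sum_eigenvectorBasis (x y : V → ℝ) :
    x ⬝ᵥ y = ∑ i, (⇑(hL.eigenvectorBasis i) ⬝ᵥ x) * (⇑(hL.eigenvectorBasis i) ⬝ᵥ y) := by
  have := hL.eigenvectorBasis.sum_inner_mul_inner (WithLp.toLp 2 x) (WithLp.toLp 2 y)
  simp only [EuclideanSpace.inner_eq_star_dotProduct, star_trivial] at this
  rw [dotProduct_comm, ← this]
  exact sum_congr rfl fun i _ => by rw [dotProduct_comm y]

lemma eigenvectorBasis_dotProduct_mulVec (x : V → ℝ) (i : V) :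
    ⇑(hL.eigenvectorBasis i) ⬝ᵥ (L *ᵥ x) = hL.eigenvalues i * (⇑(hL.eigenvectorBasis i) ⬝ᵥ x) := by
  have hLT : Lᵀ = L := by simpa [conjTranspose_eq_transpose_of_trivial] using hL.eq
  rw [dotProduct_mulVec, ← mulVec_transpose, hLT, mulVec_eigenvectorBasis, smul_dotProduct,
    smul_eq_mul]

end Matrix.IsHermitian

lemma IsEigenSeq.map_eigenvalues {V : Type*} [Fintype V] [DecidableEq V] {L : Matrix V V ℝ}
    (hL : L.IsHermitian) {n : ℕ} {μ : Fin n → ℝ} (hμ : IsEigenSeq L μ) :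
    univ.val.map hL.eigenvalues = univ.val.map μ := by
  have := hL.roots_charpoly_eq_eigenvalues
  rw [hμ.2, Polynomial.roots_prod _ _ (prod_ne_zero_iff.mpr fun i _ => X_sub_C_ne_zero _)] at this
  simpa using this.symm

lemma IsEigenSeq.card_eigenvalues_lt_le_one {V : Type*} [Fintype V] [DecidableEq V]
    {L : Matrix V V ℝ} (hL : L.IsHermitian) {n : ℕ} {μ : Fin n → ℝ} (hμ : IsEigenSeq L μ)
    (h1 : 1 < n) : #{i | hL.eigenvalues i < μ ⟨1, h1⟩} ≤ 1 := by
  have hcard := congrArg (fun s => Multiset.card (s.filter (· < μ ⟨1, h1⟩)))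
    (hμ.map_eigenvalues hL)
  simp only [Multiset.filter_map, Multiset.card_map] at hcard
  change #{i | hL.eigenvalues i < μ ⟨1, h1⟩} = #{j | μ j < μ ⟨1, h1⟩} at hcard
  rw [hcard, card_le_one]
  have hzero : ∀ j ∈ ({j | μ j < μ ⟨1, h1⟩} : Finset _), (j : ℕ) = 0 := fun j hj => by
    by_contra hj0
    exact (mem_filter.mp hj).2.not_ge (hμ.1 (Fin.le_def.mpr (show 1 ≤ (j : ℕ) by omega)))
  exact fun a ha b hb => Fin.ext ((hzero a ha).trans (hzero b hb).symm)

theorem Matrix.PosSemidef.eigenSeq_one_mul_le_dotProduct_mulVec {V : Type*} [Fintype V]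
    [DecidableEq V] {L : Matrix V V ℝ} (hL : L.PosSemidef) {n : ℕ} {μ : Fin n → ℝ}
    (hμ : IsEigenSeq L μ) (h1 : 1 < n) {φ : V → ℝ} (hφ : φ ≠ 0) (hLφ : L *ᵥ φ = 0)
    {f : V → ℝ} (hf : f ⬝ᵥ φ = 0) : μ ⟨1, h1⟩ * (f ⬝ᵥ f) ≤ f ⬝ᵥ (L *ᵥ f) := by
  have hparseval := hL.1.dotProduct_eq_sum_eigenvectorBasis
  have heigen := hL.1.eigenvectorBasis_dotProduct_mulVec
  have hb : (fun i => ⇑(hL.1.eigenvectorBasis i) ⬝ᵥ φ) ≠ 0 := fun h => hφ <|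
    dotProduct_self_eq_zero.mp <| by
      simp only [hparseval φ φ, funext_iff.mp h, Pi.zero_apply, mul_zero, sum_const_zero]
  have hνb (i : V) : hL.1.eigenvalues i * (⇑(hL.1.eigenvectorBasis i) ⬝ᵥ φ) = 0 := by
    rw [← heigen, hLφ, dotProduct_zero]
  rw [hparseval] at hf
  have key := mul_sum_sq_le_of_orthogonal_to_kernel hL.eigenvalues_nonneg
    (hμ.card_eigenvalues_lt_le_one hL.1 h1) hb hνb hf
  rw [hparseval f f, hparseval f (L *ᵥ f)]
  simp only [heigen, ← sq]
  exact key.trans_eq (sum_congr rfl fun i _ => by ring)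

lemma ddeg_transpose {V : Type*} [Fintype V] {A : Matrix V V ℝ}
    (hEuler : ∀ x, (∑ y, A x y) = ∑ y, A y x) : ddeg Aᵀ = ddeg A :=
  funext fun x => (hEuler x).symm

lemma dphi_transpose {V : Type*} [Fintype V] {A : Matrix V V ℝ}
    (hEuler : ∀ x, (∑ y, A x y) = ∑ y, A y x) : dphi Aᵀ = dphi A := by
  unfold dphi dvol
  rw [ddeg_transpose hEuler]

section Digraph

variable {V : Type*} [Fintype V] [DecidableEq V] {A : Matrix V V ℝ}

lemma dvecL_transpose (hEuler : ∀ x, (∑ y, A x y) = ∑ y, A y x) : (dvecL A)ᵀ = dvecL Aᵀ := by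
  rw [dvecL, dvecL, dInvSqrtT, dInvSqrtT, ddeg_transpose hEuler, transpose_sub, transpose_one,
    transpose_mul, transpose_mul, diagonal_transpose, mul_assoc]

lemma dInvSqrtT_mul_mul_dInvSqrtT_apply (x y : V) :
    (dInvSqrtT A * A * dInvSqrtT A) x y = A x y / (√(ddeg A x) * √(ddeg A y)) := by
  rw [dInvSqrtT, mul_diagonal, diagonal_mul]
  field_simp

lemma dvecL_mulVec_sqrt_ddeg (hdeg : ∀ x, 0 < ddeg A x) :
    dvecL A *ᵥ (fun x => √(ddeg A x)) = 0 := by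
  ext x
  have hsqrt (y : V) : √(ddeg A y) ≠ 0 := (Real.sqrt_pos.mpr (hdeg y)).ne'
  have hrow : ∑ y, A x y / (√(ddeg A x) * √(ddeg A y)) * √(ddeg A y) = √(ddeg A x) := by
    simp only [div_mul_eq_div_div, div_mul_cancel₀ _ (hsqrt _), ← sum_div]
    rw [div_eq_iff (hsqrt x), Real.mul_self_sqrt (hdeg x).le, ddeg]
  rw [dvecL, sub_mulVec, one_mulVec]
  simp only [Pi.sub_apply, Pi.zero_apply, mulVec, dotProduct, dInvSqrtT_mul_mul_dInvSqrtT_apply,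
    hrow, sub_self]

lemma dvecL_mulVec_dphi (hdeg : ∀ x, 0 < ddeg A x) : dvecL A *ᵥ dphi A = 0 := by
  have hphi : dphi A = (√(dvol A univ))⁻¹ • fun x => √(ddeg A x) := by
    ext x
    simp [dphi, div_eq_inv_mul]
  rw [hphi, mulVec_smul, dvecL_mulVec_sqrt_ddeg hdeg, smul_zero]

lemma dLap_mulVec_dphi (hEuler : ∀ x, (∑ y, A x y) = ∑ y, A y x) (hdeg : ∀ x, 0 < ddeg A x) :
    dLap A *ᵥ dphi A = 0 := by
  have hdegT : ∀ x, 0 < ddeg Aᵀ x := by rwa [ddeg_transpose hEuler]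
  rw [dLap, smul_mulVec, add_mulVec, dvecL_transpose hEuler, dvecL_mulVec_dphi hdeg,
    ← dphi_transpose hEuler, dvecL_mulVec_dphi hdegT, add_zero, smul_zero]

lemma dLap_isHermitian : (dLap A).IsHermitian := by
  rw [IsHermitian, conjTranspose_eq_transpose_of_trivial, dLap, transpose_smul, transpose_add,
    transpose_transpose, add_comm]

lemma dotProduct_dLap_mulVec (g : V → ℝ) : g ⬝ᵥ (dLap A *ᵥ g) = g ⬝ᵥ (dvecL A *ᵥ g) := by
  rw [dLap, smul_mulVec, add_mulVec, dotProduct_smul, dotProduct_add, mulVec_transpose,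
    dotProduct_comm g (g ᵥ* _), ← dotProduct_mulVec, smul_eq_mul]
  ring

lemma dotProduct_dvecL_mulVec (hEuler : ∀ x, (∑ y, A x y) = ∑ y, A y x)
    (hdeg : ∀ x, 0 < ddeg A x) (g : V → ℝ) :
    g ⬝ᵥ (dvecL A *ᵥ g) =
      (∑ x, ∑ y, A x y * (g x / √(ddeg A x) - g y / √(ddeg A y)) ^ 2) / 2 := by
  set h := fun x => g x / √(ddeg A x)
  have hg (x : V) : g x ^ 2 = ddeg A x * h x ^ 2 := by
    rw [div_pow, Real.sq_sqrt (hdeg x).le, mul_div_cancel₀ _ (hdeg x).ne']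
  have hrow : ∑ x, ∑ y, A x y * h x ^ 2 = ∑ x, g x ^ 2 := by
    simp only [← sum_mul, hg, ddeg]
  have hcol : ∑ x, ∑ y, A x y * h y ^ 2 = ∑ x, g x ^ 2 := by
    rw [sum_comm]
    simp only [← sum_mul, ← hEuler, hg, ddeg]
  have hcross : g ⬝ᵥ (dvecL A *ᵥ g) = ∑ x, g x ^ 2 - ∑ x, ∑ y, A x y * (h x * h y) := by
    rw [dvecL, sub_mulVec, one_mulVec, dotProduct_sub]
    simp only [dotProduct, mulVec, dInvSqrtT_mul_mul_dInvSqrtT_apply, mul_sum, sq, h]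
    congr 1
    exact sum_congr rfl fun x _ => sum_congr rfl fun y _ => by ring
  calc g ⬝ᵥ (dvecL A *ᵥ g)
      = (∑ x, ∑ y, A x y * h x ^ 2 + ∑ x, ∑ y, A x y * h y ^ 2
          - 2 * ∑ x, ∑ y, A x y * (h x * h y)) / 2 := by rw [hcross, hrow, hcol]; ring
    _ = (∑ x, ∑ y, A x y * (h x - h y) ^ 2) / 2 := by
      simp only [← sum_add_distrib, mul_sum, ← sum_sub_distrib]
      congr 1
      exact sum_congr rfl fun x _ => sum_congr rfl fun y _ => by ring

lemma dLap_posSemidef (hA : ∀ x y, 0 ≤ A x y) (hEuler : ∀ x, (∑ y, A x y) = ∑ y, A y x)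
    (hdeg : ∀ x, 0 < ddeg A x) : (dLap A).PosSemidef :=
  .of_dotProduct_mulVec_nonneg dLap_isHermitian fun g => by
    rw [star_trivial, dotProduct_dLap_mulVec, dotProduct_dvecL_mulVec hEuler hdeg]
    exact div_nonneg (sum_nonneg fun x _ => sum_nonneg fun y _ =>
      mul_nonneg (hA x y) (sq_nonneg _)) zero_le_two

end Digraph

lemma euclNorm_sq {m : Type*} [Fintype m] (f : m → ℝ) : euclNorm f ^ 2 = f ⬝ᵥ f := by
  rw [euclNorm, Real.sq_sqrt (sum_nonneg fun i _ => sq_nonneg _), dotProduct]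
  simp only [sq]

lemma euclNorm_pos {m : Type*} [Fintype m] {f : m → ℝ} (hf : f ≠ 0) : 0 < euclNorm f := by
  obtain ⟨x, hx⟩ := Function.ne_iff.mp hf
  have hx : f x ≠ 0 := hx
  exact Real.sqrt_pos.mpr (sum_pos' (fun i _ => sq_nonneg _) ⟨x, mem_univ x, by positivity⟩)

lemma dphi_pos {V : Type*} [Fintype V] {A : Matrix V V ℝ} (hdeg : ∀ x, 0 < ddeg A x) (x : V) :
    0 < dphi A x :=
  div_pos (Real.sqrt_pos.mpr (hdeg x))
    (Real.sqrt_pos.mpr (sum_pos (fun y _ => hdeg y) ⟨x, mem_univ x⟩))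

section Lazy

variable {V : Type*} [Fintype V] [DecidableEq V] {A : Matrix V V ℝ}

lemma dLalpha_zero : dLalpha A 0 = 1 - dvecL A := by
  rw [dLalpha, sub_zero, one_smul]

lemma dLalpha_eq_smul_one_add_smul (α : ℝ) :
    dLalpha A α = α • 1 + (1 - α) • dLalpha A 0 := by
  rw [dLalpha, dLalpha_zero]
  module

lemma euclNorm_mulVec_le_of_mem_upperBounds {α σ : ℝ} (hσ : σ ∈ upperBounds (sigmaSet A α))
    {f : V → ℝ} (hf : f ≠ 0) (hfφ : ∑ x, f x * dphi A x = 0) :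
    euclNorm (dLalpha A α *ᵥ f) ≤ σ * euclNorm f :=
  (div_le_iff₀ (euclNorm_pos hf)).mp (hσ ⟨f, hf, hfφ, rfl⟩)

end Lazy

/-- `σ_α² ≤ α² + 2α(1-α)(1-λ₁) + (1-α)²σ₀²` for a Eulerian
directed graph. -/
theorem stmt_5 {V : Type*} [Fintype V] [DecidableEq V]
    (A : Matrix V V ℝ)
    (h01 : ∀ x y, A x y = 0 ∨ A x y = 1)
    (hEuler : ∀ x, (∑ y, A x y) = ∑ y, A y x)
    (hdegpos : ∀ x, 0 < ddeg A x)
    (n : ℕ) (hn2 : 2 ≤ n)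
    (μ : Fin n → ℝ) (hμ : IsEigenSeq (dLap A) μ)
    (α : ℝ) (hα0 : 0 ≤ α) (hα1 : α ≤ 1)
    (σ₀ : ℝ) (hσ₀ : IsGreatest (sigmaSet A 0) σ₀)
    (σα : ℝ) (hσα : IsGreatest (sigmaSet A α) σα) :
    σα ^ 2 ≤ α ^ 2 + 2 * α * (1 - α) * (1 - μ ⟨1, by omega⟩) + (1 - α) ^ 2 * σ₀ ^ 2 := by
  obtain ⟨f, hf, hfφ, rfl⟩ := hσα.1
  obtain ⟨x, -⟩ := Function.ne_iff.mp hf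
  set g := dLalpha A 0 *ᵥ f with hg
  have hA : ∀ x y, 0 ≤ A x y := fun x y => by rcases h01 x y with h | h <;> simp [h]
  have hfg : f ⬝ᵥ g ≤ (1 - μ ⟨1, by omega⟩) * (f ⬝ᵥ f) := by
    have := (dLap_posSemidef hA hEuler hdegpos).eigenSeq_one_mul_le_dotProduct_mulVec hμ
      (by omega) (fun h => (dphi_pos hdegpos x).ne' (congrFun h x))
      (dLap_mulVec_dphi hEuler hdegpos) (f := f) (by rwa [dotProduct])
    rw [dotProduct_dLap_mulVec] at this
    rw [hg, dLalpha_zero, sub_mulVec, one_mulVec, dotProduct_sub]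
    linarith
  have hgg : g ⬝ᵥ g ≤ σ₀ ^ 2 * (f ⬝ᵥ f) := by
    rw [← euclNorm_sq, ← euclNorm_sq, ← mul_pow]
    exact pow_le_pow_left₀ (Real.sqrt_nonneg _)
      (euclNorm_mulVec_le_of_mem_upperBounds hσ₀.2 hf hfφ) 2
  have hLα : (dLalpha A α *ᵥ f) ⬝ᵥ (dLalpha A α *ᵥ f)
      = α ^ 2 * (f ⬝ᵥ f) + 2 * α * (1 - α) * (f ⬝ᵥ g) + (1 - α) ^ 2 * (g ⬝ᵥ g) := by
    rw [dLalpha_eq_smul_one_add_smul, add_mulVec, smul_mulVec, smul_mulVec, one_mulVec, ← hg]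
    simp only [add_dotProduct, dotProduct_add, smul_dotProduct, dotProduct_smul, smul_eq_mul,
      dotProduct_comm g f]
    ring
  rw [div_pow, div_le_iff₀ (pow_pos (euclNorm_pos hf) 2), euclNorm_sq, euclNorm_sq, hLα]
  nlinarith [mul_nonneg (mul_nonneg hα0 (sub_nonneg.mpr hα1)) (sub_nonneg.mpr hfg),
    mul_nonneg (sq_nonneg (1 - α)) (sub_nonneg.mpr hgg)]
end
end
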